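/- Let F be a face of P. Suppose there exist f ∈ J_F and g, c, d ∈ H₂ such that c ∉ J_F, c − d ∈ J_F, and f·g = c·d. Then F is not exposed: there is no linear functional L : H₄ → ℝ with L(h) ≥ 0 for all h ∈ P and F = {h ∈ P : L(h) = 0}. In particular, if there exist f ∈ J_F, g ∈ H₂ and c ∈ H₂ \ J_F with f·g = c², then F is not exposed. -/
import Mathlib


open MvPolynomial

noncomputable section

/-- The space of ternary (3-variable) real polynomials. `H d` corresponds to the
homogeneous polynomials of degree `d` via the predicate `IsHomogeneous`. -/
abbrev MvP : Type := MvPolynomial (Fin 3) ℝ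

/-- The cone `P` of nonnegative ternary quartics. -/
def Pcone : Set MvP :=
  {f | f.IsHomogeneous 4 ∧ ∀ a : Fin 3 → ℝ, 0 ≤ eval a f}

/-- `F` is a face of the cone `P`. -/
def IsFace (F : Set MvP) : Prop :=
  F ⊆ Pcone ∧
  (∀ a ∈ F, ∀ b ∈ F, a + b ∈ F) ∧
  (∀ c : ℝ, 0 ≤ c → ∀ a ∈ F, c • a ∈ F) ∧
  (∀ a ∈ Pcone, ∀ b ∈ Pcone, a + b ∈ F → a ∈ F ∧ b ∈ F)

/-- `J_F = {q ∈ H₂ : q² ∈ F}`. -/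
def Jset (F : Set MvP) : Set MvP :=
  {q | q.IsHomogeneous 2 ∧ q ^ 2 ∈ F}

/-- `F` is an exposed face of `P`. -/
def ExposedFace (F : Set MvP) : Prop :=
  ∃ L : MvP →ₗ[ℝ] ℝ, (∀ h ∈ Pcone, 0 ≤ L h) ∧ F = {h ∈ Pcone | L h = 0}

lemma sq_mem_Pcone {p : MvP} (hp : p.IsHomogeneous 2) : p ^ 2 ∈ Pcone := by
  constructor
  · have := hp.pow 2
    simpa using this
  · intro a
    rw [map_pow]
    exact sq_nonneg _

lemma CS (L : MvP →ₗ[ℝ] ℝ) (hL : ∀ h ∈ Pcone, 0 ≤ L h) {q r : MvP}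
    (hq : q.IsHomogeneous 2) (hr : r.IsHomogeneous 2) (h0 : L (q ^ 2) = 0) :
    L (q * r) = 0 := by
  set a := L (q * r) with ha
  have hb : 0 ≤ L (r ^ 2) := hL _ (sq_mem_Pcone hr)
  set b := L (r ^ 2) with hbdef
  have key : ∀ t : ℝ, 0 ≤ (t + t) * a + (t * t) * b := by
    intro t
    have hsr : (t • r).IsHomogeneous 2 := by
      rw [smul_eq_C_mul]
      simpa using (isHomogeneous_C (Fin 3) t).mul hr
    have hhom : (q + t • r).IsHomogeneous 2 := hq.add hsr
    have hexp : (q + t • r) ^ 2 = q ^ 2 + (t + t) • (q * r) + (t * t) • r ^ 2 := by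
      simp only [smul_eq_C_mul, map_add, map_mul]
      ring
    have := hL _ (sq_mem_Pcone hhom)
    rw [hexp] at this
    simp only [map_add, map_smul, smul_eq_mul, h0, zero_add] at this
    linarith
  have hb1 : (0:ℝ) < b + 1 := by linarith
  have h := key (-a / (b + 1))
  have h2 : 0 ≤ ((-a / (b+1) + -a / (b+1)) * a + (-a / (b+1)) * (-a / (b+1)) * b) * ((b+1)^2) :=
    mul_nonneg h (by positivity)
  have h3 : ((-a / (b+1) + -a / (b+1)) * a + (-a / (b+1)) * (-a / (b+1)) * b) * ((b+1)^2)
      = -(a^2) * (b+2) := by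
    field_simp
    ring
  rw [h3] at h2
  have ha2 : a ^ 2 ≤ 0 := by nlinarith
  have : a ^ 2 = 0 := le_antisymm ha2 (sq_nonneg a)
  exact pow_eq_zero_iff (by norm_num) |>.mp this

/-- Lemma `exp`: if there exist `f ∈ J_F` and `g, c, d ∈ H₂` with
`c ∉ J_F`, `c − d ∈ J_F` and `f g = c d`, then `F` is not exposed; in particular this
holds if `f g = c²` with `f ∈ J_F` and `c ∈ H₂ \ J_F`. -/
theorem stmt_17 (F : Set MvP) (hF : IsFace F) :
    (∀ f g c d : MvP, f ∈ Jset F →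
      g.IsHomogeneous 2 → c.IsHomogeneous 2 → d.IsHomogeneous 2 →
      c ∉ Jset F → c - d ∈ Jset F → f * g = c * d → ¬ ExposedFace F) ∧
    (∀ f g c : MvP, f ∈ Jset F →
      g.IsHomogeneous 2 → c.IsHomogeneous 2 →
      c ∉ Jset F → f * g = c ^ 2 → ¬ ExposedFace F) := by
  have main : ∀ f g c d : MvP, f ∈ Jset F →
      g.IsHomogeneous 2 → c.IsHomogeneous 2 → d.IsHomogeneous 2 →
      c ∉ Jset F → c - d ∈ Jset F → f * g = c * d → ¬ ExposedFace F := by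
    intro f g c d hf hg hc hd hcJ hcd hfg hexp
    obtain ⟨L, hL, hFeq⟩ := hexp
    have hJiff : ∀ p : MvP, p.IsHomogeneous 2 → (p ∈ Jset F ↔ L (p ^ 2) = 0) := by
      intro p hp
      constructor
      · intro hpJ
        have : p ^ 2 ∈ F := hpJ.2
        rw [hFeq] at this
        exact this.2
      · intro h0
        exact ⟨hp, by rw [hFeq]; exact ⟨sq_mem_Pcone hp, h0⟩⟩
    have hf2 : L (f ^ 2) = 0 := (hJiff f hf.1).1 hf
    have hfg0 : L (f * g) = 0 := CS L hL hf.1 hg hf2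
    have hcd2 : L ((c - d) ^ 2) = 0 := (hJiff _ hcd.1).1 hcd
    have hcdc : L ((c - d) * c) = 0 := CS L hL hcd.1 hc hcd2
    have hdc : L (c * d) = 0 := by rw [← hfg]; exact hfg0
    have hc2 : L (c ^ 2) = 0 := by
      have hring : c ^ 2 = (c - d) * c + c * d := by ring
      rw [hring, map_add, hcdc, hdc, add_zero]
    exact hcJ ((hJiff c hc).2 hc2)
  refine ⟨main, ?_⟩
  intro f g c hf hg hc hcJ hfg hexp
  obtain ⟨L, hL, hFeq⟩ := hexp
  have hf2 : L (f ^ 2) = 0 := by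
    have : f ^ 2 ∈ F := hf.2
    rw [hFeq] at this
    exact this.2
  have hfg0 : L (f * g) = 0 := CS L hL hf.1 hg hf2
  have hc2 : L (c ^ 2) = 0 := by rw [← hfg]; exact hfg0
  exact hcJ ⟨hc, by rw [hFeq]; exact ⟨sq_mem_Pcone hc, hc2⟩⟩
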